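/- The set of vector fields of the form (def q)(x)·x with q a polynomial vector field of degree at most k+1 equals the set of vector fields τ(x)·x with τ a symmetric-matrix-valued polynomial field of degree at most k: (def ℙ_{k+1}(ℝ^d; ℝ^d))·x = ℙ_k(ℝ^d; 𝕊)·x. -/

import Mathlib

/-!
The inclusion `⊆` holds because `def q` is symmetric of degree `k`. For `⊇`, split `τ` into
homogeneous components `σ` of degree `m ≤ k` and put `w = σx`, `φ = x·σx`. Euler's identity
and the product rule give `(def w)x = (m w + ∇φ)/2` and `(def ∇φ)x = (m + 1)∇φ`, so for
`m ≥ 1` the field `q = (2/m) w - ∇φ/(m(m + 1))`, homogeneous of degree `m + 1`, satisfies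
`(def q)x = σx`; for constant `σ`, already `def w = σ`.
-/

open MvPolynomial Finset

/-- The symmetric gradient `def q = sym(∇q)` of a polynomial vector field. -/
noncomputable def defGrad (d : ℕ) (q : Fin d → MvPolynomial (Fin d) ℝ) :
    Fin d → Fin d → MvPolynomial (Fin d) ℝ :=
  fun i j => C (2⁻¹ : ℝ) * (pderiv j (q i) + pderiv i (q j))

namespace MvPolynomial

section CommSemiring

variable {ι R : Type*} [CommSemiring R]

theorem totalDegree_pderiv_le (i : ι) (p : MvPolynomial ι R) :
    (pderiv i p).totalDegree ≤ p.totalDegree - 1 := by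
  conv_lhs => rw [← sum_homogeneousComponent p, map_sum]
  refine totalDegree_finsetSum_le fun n hn => ?_
  have := Finset.mem_range.mp hn
  exact (homogeneousComponent_isHomogeneous n p).pderiv.totalDegree_le.trans (by omega)

theorem pderiv_eq_zero_of_isHomogeneous_zero {p : MvPolynomial ι R} (hp : p.IsHomogeneous 0)
    (i : ι) : pderiv i p = 0 := by
  rw [← totalDegree_zero_iff_isHomogeneous, totalDegree_eq_zero_iff_eq_C] at hp
  rw [hp, pderiv_C]

theorem sum_range_homogeneousComponent_of_totalDegree_le {p : MvPolynomial ι R} {k : ℕ}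
    (hp : p.totalDegree ≤ k) : ∑ m ∈ range (k + 1), homogeneousComponent m p = p := by
  refine Eq.trans ?_ (sum_homogeneousComponent p)
  refine (sum_subset (range_subset_range.mpr (by omega)) fun m _ hm => ?_).symm
  exact homogeneousComponent_eq_zero _ _ (by simp only [mem_range, not_lt] at hm; omega)

variable [Fintype ι]

noncomputable def dotX : (ι → MvPolynomial ι R) →ₗ[R] MvPolynomial ι R where
  toFun q := ∑ i, q i * X i
  map_add' q q' := by simp only [Pi.add_apply, add_mul, sum_add_distrib]
  map_smul' c q := by simp only [Pi.smul_apply, smul_mul_assoc, smul_sum, RingHom.id_apply]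

theorem dotX_apply (q : ι → MvPolynomial ι R) : dotX q = ∑ i, q i * X i := rfl

theorem isHomogeneous_dotX {q : ι → MvPolynomial ι R} {n : ℕ}
    (hq : ∀ i, (q i).IsHomogeneous n) : (dotX q).IsHomogeneous (n + 1) :=
  IsHomogeneous.sum _ _ _ fun i _ => (hq i).mul (isHomogeneous_X R i)

theorem pderiv_dotX (i : ι) (q : ι → MvPolynomial ι R) :
    pderiv i (dotX q) = dotX (fun j => pderiv i (q j)) + q i := by
  classical
  simp only [dotX_apply, map_sum, pderiv_mul, pderiv_X, sum_add_distrib, Pi.single_apply,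
    mul_ite, mul_one, mul_zero, sum_ite_eq', mem_univ, if_true]

theorem IsHomogeneous.dotX_pderiv {ψ : MvPolynomial ι R} {n : ℕ} (hψ : ψ.IsHomogeneous n) :
    dotX (fun i => pderiv i ψ) = n • ψ := by
  rw [dotX_apply, ← hψ.sum_X_mul_pderiv]
  simp_rw [mul_comm]

end CommSemiring

end MvPolynomial

section SymmetricGradient

variable {d : ℕ}

local notation "P" => MvPolynomial (Fin d) ℝ

noncomputable def mulX : (Fin d → Fin d → P) →ₗ[ℝ] Fin d → P :=
  LinearMap.pi fun i => dotX ∘ₗ LinearMap.proj i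

theorem mulX_apply (σ : Fin d → Fin d → P) (i : Fin d) : mulX σ i = dotX (σ i) := rfl

theorem defGrad_eq_smul (q : Fin d → P) (i j : Fin d) :
    defGrad d q i j = (2⁻¹ : ℝ) • (pderiv j (q i) + pderiv i (q j)) :=
  C_mul'

theorem defGrad_symm (q : Fin d → P) (i j : Fin d) : defGrad d q i j = defGrad d q j i := by
  rw [defGrad, defGrad, add_comm]

theorem totalDegree_defGrad_le {q : Fin d → P} {k : ℕ} (hq : ∀ i, (q i).totalDegree ≤ k + 1)
    (i j : Fin d) : (defGrad d q i j).totalDegree ≤ k := by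
  rw [defGrad_eq_smul]
  refine (totalDegree_smul_le _ _).trans <| (totalDegree_add _ _).trans <| max_le ?_ ?_
  · exact (totalDegree_pderiv_le _ _).trans (by have := hq i; omega)
  · exact (totalDegree_pderiv_le _ _).trans (by have := hq j; omega)

noncomputable def defGradMulX : (Fin d → P) →ₗ[ℝ] Fin d → P where
  toFun q i := dotX (defGrad d q i)
  map_add' q q' := by
    funext i
    simp only [Pi.add_apply, ← map_add]
    congr 1
    funext j
    simp only [defGrad_eq_smul, Pi.add_apply, map_add]
    module
  map_smul' c q := by
    funext i
    simp only [Pi.smul_apply, RingHom.id_apply, ← map_smul]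
    congr 1
    funext j
    simp only [defGrad_eq_smul, Pi.smul_apply, Derivation.map_smul]
    module

theorem defGradMulX_apply (q : Fin d → P) (i : Fin d) :
    defGradMulX q i = dotX (defGrad d q i) := rfl

/-- For `q` homogeneous of degree `n`, Euler's identity turns `(∇q)x` into `n q`, and the
product rule turns `(∇q)ᵀx` into `∇(x·q) - q`. -/
theorem defGradMulX_of_isHomogeneous {q : Fin d → P} {n : ℕ}
    (hq : ∀ i, (q i).IsHomogeneous n) :
    defGradMulX q = (2⁻¹ : ℝ) • (((n : ℝ) - 1) • q + fun i => pderiv i (dotX q)) := by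
  funext i
  have euler : dotX (fun j => pderiv j (q i)) = (n : ℝ) • q i := by
    rw [(hq i).dotX_pderiv, Nat.cast_smul_eq_nsmul]
  have transpose : dotX (fun j => pderiv i (q j)) = pderiv i (dotX q) - q i :=
    eq_sub_of_add_eq (pderiv_dotX i q).symm
  calc defGradMulX q i
      = (2⁻¹ : ℝ) • (dotX (fun j => pderiv j (q i)) + dotX (fun j => pderiv i (q j))) := by
        rw [defGradMulX_apply, ← map_add, ← map_smul]
        exact congrArg dotX (funext fun j => defGrad_eq_smul q i j)
    _ = _ := by
        rw [euler, transpose]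
        simp only [Pi.smul_apply, Pi.add_apply]
        module

theorem defGradMulX_mulX {σ : Fin d → Fin d → P} {m : ℕ}
    (hσ : ∀ i j, (σ i j).IsHomogeneous m) :
    defGradMulX (mulX σ) = (2⁻¹ : ℝ) • ((m : ℝ) • mulX σ + fun i => pderiv i (dotX (mulX σ))) := by
  rw [defGradMulX_of_isHomogeneous (q := mulX σ) fun i => isHomogeneous_dotX (hσ i), Nat.cast_succ,
    add_sub_cancel_right]

theorem defGradMulX_grad {ψ : P} {n : ℕ} (hψ : ψ.IsHomogeneous (n + 1)) :
    defGradMulX (fun i => pderiv i ψ) = (n : ℝ) • fun i => pderiv i ψ := by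
  rw [defGradMulX_of_isHomogeneous (n := n) fun i => by simpa using hψ.pderiv (i := i),
    hψ.dotX_pderiv]
  funext i
  simp only [Pi.smul_apply, Pi.add_apply]
  rw [map_nsmul, ← Nat.cast_smul_eq_nsmul ℝ, Nat.cast_succ]
  module

theorem defGradMulX_mulX_of_isHomogeneous_zero {σ : Fin d → Fin d → P}
    (hσ : ∀ i j, (σ i j).IsHomogeneous 0) (hsym : ∀ i j, σ i j = σ j i) :
    defGradMulX (mulX σ) = mulX σ := by
  have hpderiv : ∀ i j, pderiv j (mulX σ i) = σ i j := fun i j => by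
    simp only [mulX_apply, pderiv_dotX, pderiv_eq_zero_of_isHomogeneous_zero (hσ _ _)]
    rw [← Pi.zero_def, map_zero, zero_add]
  funext i
  rw [defGradMulX_apply, mulX_apply]
  congr 1
  funext j
  rw [defGrad_eq_smul, hpderiv, hpderiv, hsym j i, ← two_smul ℝ, smul_smul,
    inv_mul_cancel₀ two_ne_zero, one_smul]

theorem exists_defGradMulX_eq_mulX_of_isHomogeneous {σ : Fin d → Fin d → P} {m : ℕ}
    (hσ : ∀ i j, (σ i j).IsHomogeneous m) (hsym : ∀ i j, σ i j = σ j i) :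
    ∃ q : Fin d → P, (∀ i, (q i).IsHomogeneous (m + 1)) ∧ defGradMulX q = mulX σ := by
  have hw : ∀ i, (mulX σ i).IsHomogeneous (m + 1) := fun i => isHomogeneous_dotX (hσ i)
  obtain _ | n := m
  · exact ⟨mulX σ, hw, defGradMulX_mulX_of_isHomogeneous_zero hσ hsym⟩
  set φ := dotX (mulX σ)
  have hφ : φ.IsHomogeneous (n + 1 + 1 + 1) := isHomogeneous_dotX hw
  have hgrad : ∀ i, (pderiv i φ).IsHomogeneous (n + 1 + 1) := fun i => hφ.pderiv
  refine ⟨(2 / (n + 1) : ℝ) • mulX σ - (1 / ((n + 1) * (n + 2)) : ℝ) • fun i => pderiv i φ,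
    fun i => ?_, ?_⟩
  · exact ((homogeneousSubmodule _ ℝ _).smul_mem _ (hw i)).sub
      ((homogeneousSubmodule _ ℝ _).smul_mem _ (hgrad i))
  · rw [map_sub, map_smul, map_smul, defGradMulX_mulX hσ, defGradMulX_grad hφ]
    have hn : (n + 1 : ℝ) ≠ 0 := n.cast_add_one_ne_zero
    push_cast
    match_scalars
    · field_simp
    · field_simp
      ring

theorem exists_defGradMulX_eq_mulX {τ : Fin d → Fin d → P} {k : ℕ}
    (hτ : ∀ i j, (τ i j).totalDegree ≤ k) (hsym : ∀ i j, τ i j = τ j i) :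
    ∃ q : Fin d → P, (∀ i, (q i).totalDegree ≤ k + 1) ∧ defGradMulX q = mulX τ := by
  let σ : ℕ → Fin d → Fin d → P := fun m i j => homogeneousComponent m (τ i j)
  have hτσ : τ = ∑ m ∈ range (k + 1), σ m := by
    funext i j
    simp only [σ, Finset.sum_apply]
    exact (sum_range_homogeneousComponent_of_totalDegree_le (hτ i j)).symm
  choose q hq hqσ using fun m => exists_defGradMulX_eq_mulX_of_isHomogeneous (σ := σ m)
    (fun i j => homogeneousComponent_isHomogeneous m _) (fun i j => by simp only [σ, hsym i j])
  refine ⟨∑ m ∈ range (k + 1), q m, fun i => ?_, ?_⟩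
  · rw [Finset.sum_apply]
    refine totalDegree_finsetSum_le fun m hm => (hq m i).totalDegree_le.trans ?_
    have := Finset.mem_range.mp hm
    omega
  · rw [map_sum, hτσ, map_sum]
    exact sum_congr rfl fun m _ => hqσ m

end SymmetricGradient

theorem stmt_11_general (d k : ℕ) :
    {v : Fin d → MvPolynomial (Fin d) ℝ |
        ∃ q : Fin d → MvPolynomial (Fin d) ℝ, (∀ i, (q i).totalDegree ≤ k + 1) ∧
          v = fun i => ∑ j : Fin d, defGrad d q i j * X j} =
    {v : Fin d → MvPolynomial (Fin d) ℝ |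
        ∃ τ : Fin d → Fin d → MvPolynomial (Fin d) ℝ,
          (∀ i j, (τ i j).totalDegree ≤ k) ∧ (∀ i j, τ i j = τ j i) ∧
          v = fun i => ∑ j : Fin d, τ i j * X j} := by
  ext v
  constructor
  · rintro ⟨q, hq, rfl⟩
    exact ⟨defGrad d q, totalDegree_defGrad_le hq, defGrad_symm q, rfl⟩
  · rintro ⟨τ, hτ, hsym, rfl⟩
    obtain ⟨q, hq, hqτ⟩ := exists_defGradMulX_eq_mulX hτ hsym
    exact ⟨q, hq, hqτ.symm⟩

/-- `(def ℙ_{k+1}(ℝ^d; ℝ^d))·x = ℙ_k(ℝ^d; 𝕊)·x`. -/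
theorem stmt_11 (d k : ℕ) (hd : 1 ≤ d) :
    {v : Fin d → MvPolynomial (Fin d) ℝ |
        ∃ q : Fin d → MvPolynomial (Fin d) ℝ, (∀ i, (q i).totalDegree ≤ k + 1) ∧
          v = fun i => ∑ j : Fin d, defGrad d q i j * X j} =
    {v : Fin d → MvPolynomial (Fin d) ℝ |
        ∃ τ : Fin d → Fin d → MvPolynomial (Fin d) ℝ,
          (∀ i j, (τ i j).totalDegree ≤ k) ∧ (∀ i j, τ i j = τ j i) ∧
          v = fun i => ∑ j : Fin d, τ i j * X j} :=
  stmt_11_general d k
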